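/- arXiv:1803.11340 — 5 statements merged into one kernel-verified Lean document; each statement's English description precedes it below -/
import Mathlib

section
/- In the Texas Chainsaw Josephus game with n soldiers and parameter k, if n = a(k+1)^b + km where a ≡ n (mod k), 1 ≤ a ≤ k, and b is the largest nonnegative integer such that n - a(k+1)^b is a nonnegative multiple of k, then the surviving soldier is the one labeled (k+1)m. -/
/-- One soldier (the head of the list) is skipped: moved to the back of the circle. -/
def skipOne (s : List (ℕ × ℕ)) : List (ℕ × ℕ) :=
  match s with
  | [] => []
  | p :: rest => rest ++ [p]

/-- The next alive soldier (head) loses one life; removed if dead.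
    Does nothing once at most one soldier remains. -/
def hitOne (s : List (ℕ × ℕ)) : List (ℕ × ℕ) :=
  match s with
  | [] => []
  | [p] => [p]
  | (x, l) :: rest => if l ≤ 1 then rest else rest ++ [(x, l - 1)]

/-- One round: skip one soldier, then hit the next `k` soldiers. -/
def felineRound (k : ℕ) (s : List (ℕ × ℕ)) : List (ℕ × ℕ) :=
  hitOne^[k] (skipOne s)

/-- Run the game with the given fuel, returning the survivor's label. -/
def felineRun (k : ℕ) : ℕ → List (ℕ × ℕ) → ℕ
  | 0, s => (s.headD (0, 0)).1
  | fuel + 1, s =>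
    if s.length ≤ 1 then (s.headD (0, 0)).1
    else felineRun k fuel (felineRound k s)

/-- The survivor of the Feline Texas Chainsaw Josephus game with `n` soldiers,
    parameter `k`, and `ℓ` lives each. -/
def felineT (n k ℓ : ℕ) : ℕ :=
  felineRun k (n * ℓ + 1) ((List.range n).map (fun i => (i, ℓ)))

/-- The survivor of the Texas Chainsaw Josephus game (one life each). -/
def chainsawT (n k : ℕ) : ℕ := felineT n k 1

/-- One-second steps of the one-life game, recording the elimination order.
    `c` is the number of eliminations remaining before the next skip. -/
def elimSteps (k : ℕ) : ℕ → ℕ → List ℕ → List ℕ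
  | 0, _, s => s
  | fuel + 1, c, s =>
    match s with
    | [] => []
    | [x] => [x]
    | a :: rest =>
      if c = 0 then elimSteps k fuel k (rest ++ [a])
      else a :: elimSteps k fuel (c - 1) rest

/-- The order in which soldiers are eliminated (the survivor is listed last). -/
def elimOrder (n k : ℕ) : List ℕ := elimSteps k ((k + 2) * (n + 1) * (n + 1)) 0 (List.range n)

/-- The second at which soldier `x` is eliminated (1-indexed position in the
    elimination order). -/
def elimTime (n k x : ℕ) : ℕ := (elimOrder n k).idxOf x + 1

/-!
With one life per soldier a round of the list simulation is a rotation: the skipped soldier moves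
to the back and the next `k` are dropped. Relabelling the `n - k` soldiers left after the first
round gives `T(n) = (T(n - k) + k + 1) mod n` for `n ≥ k + 2` (with `k` fixed), while `T(n) = 0`
for `n ≤ k + 1`. If `T(N) = 0`, each step `N + k i ↦ N + k (i + 1)` with `i + 1 < N` adds `k + 1`
without wrapping around, so `T(N + k m) = (k + 1) m` for `m < N`; taking `m = N - 1` gives
`T((k + 1) N) = 0`, hence `T(a (k + 1)^b) = 0` for `1 ≤ a ≤ k`. Maximality of `b` forces
`m < a (k + 1)^b`, since otherwise `n = a (k + 1)^(b + 1) + k (m - a (k + 1)^b)`.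
-/

open List

section Simulation

variable {k : ℕ}

theorem hitOne_iterate_map_one (j : ℕ) {l : List ℕ} (hl : l ≠ []) :
    hitOne^[j] (l.map (·, 1)) = (l.drop (min j (l.length - 1))).map (·, 1) := by
  induction j generalizing l with
  | zero => simp
  | succ j ih =>
    rw [Function.iterate_succ_apply]
    match l with
    | [x] => exact Function.iterate_fixed rfl j
    | x :: y :: l =>
      have hhit : hitOne ((x :: y :: l).map (·, 1)) = (y :: l).map (·, 1) := by simp [hitOne]
      rw [hhit, ih (cons_ne_nil y l)]
      simp [Nat.add_min_add_right]

theorem felineRound_map_one (l : List ℕ) :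
    felineRound k (l.map (·, 1)) = (l.drop (k + 1) ++ l.take 1).map (·, 1) := by
  match l with
  | [] => exact Function.iterate_fixed rfl k
  | x :: l =>
    have hskip : skipOne ((x :: l).map (·, 1)) = (l ++ [x]).map (·, 1) := by simp [skipOne]
    rw [felineRound, hskip, hitOne_iterate_map_one k (by simp)]
    congr 1
    rcases le_or_gt k l.length with h | h
    · simp [drop_append, Nat.sub_eq_zero_of_le h, h]
    · simp [h.le]

theorem felineRun_succ_map_one {fuel : ℕ} {l : List ℕ} (hl : 2 ≤ l.length) :
    felineRun k (fuel + 1) (l.map (·, 1)) =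
      felineRun k fuel ((l.drop (k + 1) ++ l.take 1).map (·, 1)) := by
  rw [felineRun, if_neg (by simp; omega), felineRound_map_one]

theorem felineRun_map_one_map (f : ℕ → ℕ) (fuel : ℕ) {l : List ℕ} (hl : l ≠ []) :
    felineRun k fuel ((l.map f).map (·, 1)) = f (felineRun k fuel (l.map (·, 1))) := by
  induction fuel generalizing l with
  | zero => obtain ⟨x, l, rfl⟩ := exists_cons_of_ne_nil hl; simp [felineRun]
  | succ fuel ih =>
    by_cases h : l.length ≤ 1
    · obtain ⟨x, rfl⟩ : ∃ x, l = [x] := length_eq_one_iff.mp (by have := length_pos_iff.mpr hl; omega)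
      simp [felineRun]
    · rw [felineRun_succ_map_one (by simp; omega), felineRun_succ_map_one (by omega),
        ← map_take, ← map_drop, ← map_append, ih]
      simp [hl]

theorem felineRun_map_one_fuel_congr (hk : 1 ≤ k) {f₁ f₂ : ℕ} {l : List ℕ}
    (h₁ : l.length ≤ f₁) (h₂ : l.length ≤ f₂) :
    felineRun k f₁ (l.map (·, 1)) = felineRun k f₂ (l.map (·, 1)) := by
  induction f₁ generalizing f₂ l with
  | zero =>
    obtain rfl : l = [] := by simpa using h₁
    cases f₂ <;> rfl
  | succ f₁ ih =>
    cases f₂ with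
    | zero => simp_all [felineRun]
    | succ f₂ =>
      by_cases h : l.length ≤ 1
      · simp [felineRun, h]
      · rw [felineRun_succ_map_one (by omega), felineRun_succ_map_one (by omega)]
        exact ih (by simp; omega) (by simp; omega)

end Simulation

section Recursion

variable {n k : ℕ}

theorem chainsawT_eq_felineRun :
    chainsawT n k = felineRun k (n + 1) ((range n).map (·, 1)) := by
  rw [chainsawT, felineT, Nat.mul_one]

theorem chainsawT_eq_zero_of_le (hn : 1 ≤ n) (h : n ≤ k + 1) : chainsawT n k = 0 := by
  rw [chainsawT_eq_felineRun]
  obtain rfl | hn2 := hn.eq_or_lt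
  · simp [felineRun]
  · rw [felineRun_succ_map_one (by simp; omega), drop_eq_nil_of_le (by simpa using h),
      take_range, Nat.min_eq_left hn]
    obtain ⟨n, rfl⟩ := Nat.exists_eq_add_of_le' hn
    simp [felineRun]

theorem range_drop_append_take_one (h : k + 1 ≤ n) :
    (range n).drop (k + 1) ++ (range n).take 1 = (range (n - k)).map (fun i => (i + (k + 1)) % n) := by
  obtain ⟨j, rfl⟩ := Nat.exists_eq_add_of_le h
  have hmod : ∀ i ∈ range j, (i + (k + 1)) % (k + 1 + j) = k + 1 + i := fun i hi => by
    rw [Nat.mod_eq_of_lt (by simp at hi; omega)]; omega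
  rw [take_range, Nat.min_eq_left (by omega), range_add, drop_left' (by simp),
    show k + 1 + j - k = j + 1 by omega, range_succ (n := j), map_append, map_congr_left hmod]
  simp [show j + (k + 1) = k + 1 + j by omega]

theorem chainsawT_rec (hk : 1 ≤ k) (h : k + 2 ≤ n) :
    chainsawT n k = (chainsawT (n - k) k + (k + 1)) % n := by
  rw [chainsawT_eq_felineRun, chainsawT_eq_felineRun, felineRun_succ_map_one (by simp; omega),
    range_drop_append_take_one (by omega),
    felineRun_map_one_fuel_congr hk (f₂ := n - k + 1) (by simp) (by simp),
    felineRun_map_one_map _ _ (by simp; omega)]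

end Recursion

section Formula

variable {k N : ℕ}

theorem chainsawT_add_mul (hk : 1 ≤ k) (hN : chainsawT N k = 0) {m : ℕ} (hm : m < N) :
    chainsawT (N + k * m) k = (k + 1) * m := by
  induction m with
  | zero => simpa using hN
  | succ m ih =>
    rw [chainsawT_rec hk (by nlinarith), show N + k * (m + 1) - k = N + k * m by
      rw [Nat.mul_succ]; omega, ih (by omega), Nat.mod_eq_of_lt (by nlinarith)]
    ring

theorem chainsawT_mul_succ_eq_zero (hk : 1 ≤ k) (hN : 1 ≤ N) (hT : chainsawT N k = 0) :
    chainsawT (N * (k + 1)) k = 0 := by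
  obtain rfl | hN2 := hN.eq_or_lt
  · exact chainsawT_eq_zero_of_le (by omega) (by omega)
  have hsub : N * (k + 1) - k = N + k * (N - 1) := by
    zify [hN, show k ≤ N * (k + 1) by nlinarith]; ring
  rw [chainsawT_rec hk (by nlinarith), hsub, chainsawT_add_mul hk hT (by omega),
    show (k + 1) * (N - 1) + (k + 1) = N * (k + 1) by zify [hN]; ring, Nat.mod_self]

theorem chainsawT_mul_pow_eq_zero (hk : 1 ≤ k) {a : ℕ} (ha1 : 1 ≤ a) (ha2 : a ≤ k) (b : ℕ) :
    chainsawT (a * (k + 1) ^ b) k = 0 := by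
  induction b with
  | zero => simpa using chainsawT_eq_zero_of_le ha1 (by omega)
  | succ b ih =>
    rw [pow_succ, ← mul_assoc]
    exact chainsawT_mul_succ_eq_zero hk (Nat.mul_pos ha1 (by positivity)) ih

end Formula

theorem chainsaw_survivor_formula_general (n k a b m : ℕ)
    (hk : 1 ≤ k)
    (ha1 : 1 ≤ a) (ha2 : a ≤ k)
    (heq : n = a * (k + 1) ^ b + k * m)
    (hmax : ∀ b' m' : ℕ, n = a * (k + 1) ^ b' + k * m' → b' ≤ b) :
    chainsawT n k = (k + 1) * m := by
  have hlt : m < a * (k + 1) ^ b := by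
    by_contra! hge
    have hsucc : n = a * (k + 1) ^ (b + 1) + k * (m - a * (k + 1) ^ b) := by
      zify [hge] at heq ⊢; rw [heq]; ring
    exact absurd (hmax _ _ hsucc) (by omega)
  rw [heq]
  exact chainsawT_add_mul hk (chainsawT_mul_pow_eq_zero hk ha1 ha2 b) hlt

/-- Theorem (Beatty–Sullivan): If `n = a(k+1)^b + km` where `a ≡ n (mod k)`,
`1 ≤ a ≤ k`, and `b` is as large as possible, then the survivor of the
Texas Chainsaw Josephus game is soldier `(k+1)m`. -/
theorem chainsaw_survivor_formula (n k a b m : ℕ)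
    (hn : 1 ≤ n) (hk : 1 ≤ k)
    (ha1 : 1 ≤ a) (ha2 : a ≤ k) (hmod : a ≡ n [MOD k])
    (heq : n = a * (k + 1) ^ b + k * m)
    (hmax : ∀ b' m' : ℕ, n = a * (k + 1) ^ b' + k * m' → b' ≤ b) :
    chainsawT n k = (k + 1) * m :=
  chainsaw_survivor_formula_general n k a b m hk ha1 ha2 heq hmax
end

section
/- In the Texas Chainsaw Josephus game with n soldiers and parameter k, where each elimination round takes k+1 seconds (one second per soldier skipped or eliminated), if a soldier's label x satisfies x = (k+1)m + s with 1 ≤ s ≤ k, then that soldier is eliminated after exactly x - m seconds. -/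
/-!
Soldier `x = (k+1)m + s` is reached during the first pass around the circle. Each of the `m`
complete rounds before it skips one soldier and eliminates `k`, and the incomplete round then
skips soldier `(k+1)m` and eliminates the `s - 1` soldiers after it. That leaves `k - (s-1) ≥ 1`
eliminations in the current round, so `x` is eliminated next, after
`km + (s-1) + 1 = x - m` seconds.
-/

lemma List.range_eq_append_cons_append_cons (a r t : ℕ) :
    List.range (a + 1 + r + 1 + t) =
      List.range a ++
        a :: (List.range' (a + 1) r ++ (a + 1 + r) :: List.range' (a + 1 + r + 1) t) := by
  have h := List.range'_append_1 (s := 0) (m := a) (n := r + (t + 1) + 1)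
  rw [Nat.zero_add] at h
  rw [← List.range'_succ, List.range'_append_1, ← List.range'_succ, List.range_eq_range',
    List.range_eq_range', h]
  congr 1; omega

section

variable {k : ℕ}

lemma elimSteps_cons_of_ne_nil (fuel c a : ℕ) {l : List ℕ} (hl : l ≠ []) :
    elimSteps k (fuel + 1) c (a :: l) =
      if c = 0 then elimSteps k fuel k (l ++ [a]) else a :: elimSteps k fuel (c - 1) l := by
  cases l with
  | nil => exact absurd rfl hl
  | cons => rfl

lemma elimSteps_append_of_length_le (fuel c : ℕ) {F rest : List ℕ} (hF : F.length ≤ c)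
    (hrest : rest ≠ []) :
    elimSteps k (fuel + F.length) c (F ++ rest) =
      F ++ elimSteps k fuel (c - F.length) rest := by
  induction F generalizing c with
  | nil => simp
  | cons a F ih =>
    simp only [List.length_cons] at hF ⊢
    rw [← add_assoc, List.cons_append, elimSteps_cons_of_ne_nil _ _ _ (by simp [hrest]),
      if_neg (by omega), ih _ (by omega), Nat.sub_sub, Nat.add_comm 1, List.cons_append]

lemma elimSteps_round (fuel a : ℕ) {F rest : List ℕ} (hF : F.length ≤ k)
    (hrest : rest ≠ []) :
    elimSteps k (fuel + F.length + 1) 0 (a :: (F ++ rest)) =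
      F ++ elimSteps k fuel (k - F.length) (rest ++ [a]) := by
  rw [elimSteps_cons_of_ne_nil _ _ _ (by simp [hrest]), if_pos rfl, List.append_assoc,
    elimSteps_append_of_length_le _ _ hF (by simp)]

lemma elimSteps_rounds (m : ℕ) {P rest : List ℕ} (hP : P.length = (k + 1) * m)
    (hrest : rest ≠ []) (fuel : ℕ) :
    ∃ E S : List ℕ, E ⊆ P ∧ E.length = k * m ∧
      elimSteps k (fuel + (k + 1) * m) 0 (P ++ rest) = E ++ elimSteps k fuel 0 (rest ++ S) := by
  induction m generalizing P rest with
  | zero => exact ⟨[], [], by simp, rfl, by simp_all⟩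
  | succ m ih =>
    have hlen : (k + 1) * (m + 1) = (k + 1) * m + k + 1 := by ring
    obtain ⟨a, Q, rfl⟩ := List.exists_cons_of_length_eq_add_one (hP.trans hlen)
    have hQ : Q.length = (k + 1) * m + k := by simpa [hlen] using hP
    obtain ⟨F, P', rfl, hF⟩ : ∃ F P', Q = F ++ P' ∧ F.length = k :=
      ⟨Q.take k, Q.drop k, (List.take_append_drop k Q).symm, by simp; omega⟩
    have hP' : P'.length = (k + 1) * m := by simp only [List.length_append, hF] at hQ; omega
    obtain ⟨E, S, hE, hElen, hrun⟩ := ih hP' (rest := rest ++ [a]) (by simp)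
    refine ⟨F ++ E, a :: S, ?_, by simp [hF, hElen]; ring, ?_⟩
    · exact List.append_subset.2 ⟨fun y hy => by simp [hy], fun y hy => by simp [hE hy]⟩
    · rw [show fuel + (k + 1) * (m + 1) = (fuel + (k + 1) * m) + F.length + 1 by rw [hF]; ring,
        List.cons_append, List.append_assoc, elimSteps_round _ _ hF.le (by simp [hrest]),
        hF, Nat.sub_self, List.append_assoc P', hrun]
      simp

end

theorem chainsaw_elim_time_nonmultiple_general (n k x m s : ℕ)
    (hxn : x < n)
    (hx : x = (k + 1) * m + s) (hs1 : 1 ≤ s) (hs2 : s ≤ k) :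
    elimTime n k x = x - m := by
  set F := List.range' ((k + 1) * m + 1) (s - 1)
  have hsplit : List.range n =
      List.range ((k + 1) * m) ++ (k + 1) * m :: (F ++ x :: List.range' (x + 1) (n - x - 1)) := by
    have h := List.range_eq_append_cons_append_cons ((k + 1) * m) (s - 1) (n - x - 1)
    rwa [show (k + 1) * m + 1 + (s - 1) = x by omega, show x + 1 + (n - x - 1) = n by omega] at h
  obtain ⟨fuel, hfuel⟩ :
      ∃ fuel, (k + 2) * (n + 1) * (n + 1) = fuel + 1 + F.length + 1 + (k + 1) * m := by
    have : n + 1 ≤ (k + 2) * (n + 1) * (n + 1) := Nat.le_mul_of_pos_left _ (by positivity)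
    exact ⟨(k + 2) * (n + 1) * (n + 1) - (1 + F.length + 1 + (k + 1) * m), by simp [F]; omega⟩
  obtain ⟨E, S, hE, hElen, hrun⟩ :=
    elimSteps_rounds (k := k) m List.length_range (List.cons_ne_nil _ _)
      (fuel + 1 + F.length + 1)
  have hxE : x ∉ E := fun h => by have := hE h; simp at this; omega
  have hxF : x ∉ F := by simp [F]; omega
  rw [elimTime, elimOrder, hsplit, hfuel, hrun, List.cons_append, List.append_assoc,
    List.cons_append (a := x),
    elimSteps_round _ _ (by simp [F]; omega) (List.cons_ne_nil _ _), List.cons_append (a := x),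
    elimSteps_cons_of_ne_nil _ _ _ (by simp), if_neg (by simp [F]; omega),
    List.idxOf_append_of_notMem hxE, List.idxOf_append_of_notMem hxF, List.idxOf_cons_self]
  simp only [hElen, F, List.length_range']
  rw [hx, add_mul, one_mul]
  omega

/-- If `x = (k+1)m + s` with `1 ≤ s ≤ k`, then soldier `x` is eliminated after
exactly `x - m` seconds in the Texas Chainsaw Josephus game. -/
theorem chainsaw_elim_time_nonmultiple (n k x m s : ℕ)
    (hk : 1 ≤ k) (hn : 1 ≤ n) (hxn : x < n)
    (hx : x = (k + 1) * m + s) (hs1 : 1 ≤ s) (hs2 : s ≤ k) :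
    elimTime n k x = x - m :=
  chainsaw_elim_time_nonmultiple_general n k x m s hxn hx hs1 hs2
end

section
/- In the Texas Chainsaw Josephus game with n soldiers and parameter k, suppose a soldier's label is x = (k+1)m. Write n - km = a(k+1)^b with a not divisible by k+1 (this a and b exist uniquely), and write a = (k+1)q + r with 0 < r < k+1. Then soldier x is eliminated after exactly n - q seconds. -/
/-!
A round skips one soldier and kills the next `k`. After `m` rounds soldier `(k+1)m` heads a
circle of `n - km` soldiers, so it suffices to show that the head of a circle of
`a(k+1)^b` soldiers is eliminated while exactly `q` others are still alive. If the circle has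
`(k+1)t` soldiers, `t` full rounds leave just the `t` skipped ones, still headed by the same
soldier: this strips the factor `(k+1)^b`. With `(k+1)q + r` soldiers, `0 < r ≤ k`, after `q`
rounds the head stands right behind the `r` soldiers not yet reached; the next round skips the
first of these, kills the other `r - 1` and then the head, leaving `q` soldiers alive.
-/

namespace Chainsaw

variable {k : ℕ}

@[simp]
lemma elimSteps_nil (fuel c : ℕ) : elimSteps k fuel c [] = [] := by
  cases fuel <;> rfl

@[simp]
lemma elimSteps_singleton (fuel c x : ℕ) : elimSteps k fuel c [x] = [x] := by
  cases fuel <;> rfl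

lemma elimSteps_skip (fuel a : ℕ) (l : List ℕ) :
    elimSteps k (fuel + 1) 0 (a :: l) = elimSteps k fuel k (l ++ [a]) := by
  cases l <;> simp [elimSteps]

lemma elimSteps_kill {c : ℕ} (hc : c ≠ 0) (fuel a : ℕ) (l : List ℕ) :
    elimSteps k (fuel + 1) c (a :: l) = a :: elimSteps k fuel (c - 1) l := by
  cases l <;> simp [elimSteps, hc]

theorem elimSteps_perm (fuel c : ℕ) (s : List ℕ) : (elimSteps k fuel c s).Perm s := by
  induction fuel generalizing c s with
  | zero => rfl
  | succ fuel ih =>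
    rcases s with _ | ⟨a, l⟩
    · simp
    · by_cases hc : c = 0
      · subst hc
        rw [elimSteps_skip]
        exact (ih _ _).trans (List.perm_append_singleton a l)
      · rw [elimSteps_kill hc]
        exact (ih _ _).cons a

lemma elimSteps_append_of_length_le {fuel c : ℕ} {t : List ℕ} (ht : t.length ≤ c)
    (u : List ℕ) :
    elimSteps k (fuel + t.length) c (t ++ u) = t ++ elimSteps k fuel (c - t.length) u := by
  induction t generalizing c with
  | nil => simp
  | cons a t ih =>
    simp only [List.length_cons] at ht ⊢
    rw [← add_assoc, List.cons_append, elimSteps_kill (by omega), ih (by omega), Nat.sub_sub,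
      add_comm 1, List.cons_append]

lemma elimSteps_round {fuel x : ℕ} {t : List ℕ} (ht : t.length = k) (u : List ℕ) :
    elimSteps k (fuel + (k + 1)) 0 (x :: (t ++ u)) = t ++ elimSteps k fuel 0 (u ++ [x]) := by
  have hblock := elimSteps_append_of_length_le (k := k) (fuel := fuel) ht.le (u ++ [x])
  rw [ht, Nat.sub_self] at hblock
  rw [← add_assoc, elimSteps_skip, List.append_assoc, hblock]

lemma exists_cons_append_of_lt_length {α : Type*} {s : List α} (hs : k < s.length) :
    ∃ x t u, s = x :: (t ++ u) ∧ t.length = k ∧ u.length = s.length - (k + 1) := by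
  obtain ⟨x, s', rfl⟩ := List.exists_cons_of_length_pos (by omega : 0 < s.length)
  refine ⟨x, s'.take k, s'.drop k, by rw [List.take_append_drop], ?_, ?_⟩ <;>
    simp only [List.length_take, List.length_drop, List.length_cons] at hs ⊢ <;> omega

lemma elimSteps_rounds (fuel j : ℕ) {s : List ℕ} (hs : (k + 1) * j ≤ s.length) :
    ∃ K V : List ℕ, V.length = j ∧
      elimSteps k (fuel + (k + 1) * j) 0 s =
        K ++ elimSteps k fuel 0 (s.drop ((k + 1) * j) ++ V) := by
  induction j generalizing s with
  | zero => exact ⟨[], [], rfl, by simp⟩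
  | succ j ih =>
    obtain ⟨x, t, u, rfl, ht, hu⟩ := exists_cons_append_of_lt_length (k := k) (s := s)
      (by nlinarith)
    simp only [List.length_cons, List.length_append, ht] at hs hu
    have hju : (k + 1) * j ≤ u.length := by rw [hu]; nlinarith
    obtain ⟨K, V, hV, hK⟩ := ih (s := u ++ [x]) (by simp; omega)
    refine ⟨t ++ K, x :: V, by simp [hV], ?_⟩
    rw [show fuel + (k + 1) * (j + 1) = fuel + (k + 1) * j + (k + 1) by ring,
      elimSteps_round ht, hK, List.drop_append_of_le_length hju,
      show (k + 1) * (j + 1) = t.length + (k + 1) * j + 1 by rw [ht]; ring,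
      List.drop_succ_cons, List.drop_length_add_append]
    simp

lemma elimSteps_rounds_cons (fuel j x : ℕ) {s : List ℕ} (hs : k + (k + 1) * j ≤ s.length) :
    ∃ K V : List ℕ, V.length = j ∧
      elimSteps k (fuel + (k + 1) * (j + 1)) 0 (x :: s) =
        K ++ elimSteps k fuel 0 (s.drop (k + (k + 1) * j) ++ x :: V) := by
  have hjk : (k + 1) * j ≤ (s.drop k).length := by simp only [List.length_drop]; omega
  obtain ⟨K, V, hV, hK⟩ :=
    elimSteps_rounds (k := k) fuel j (s := s.drop k ++ [x]) (by simp; omega)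
  refine ⟨s.take k ++ K, V, hV, ?_⟩
  conv_lhs => rw [← List.take_append_drop k s]
  rw [show fuel + (k + 1) * (j + 1) = fuel + (k + 1) * j + (k + 1) by ring,
    elimSteps_round (by simp only [List.length_take]; omega), hK,
    List.drop_append_of_le_length hjk, List.drop_drop]
  simp [add_comm k]

lemma exists_suffix_elimSteps_of_eq_mul_add {q r fuel x : ℕ} {s : List ℕ} (hr1 : 0 < r)
    (hr2 : r < k + 1) (hs : s.length + 1 = (k + 1) * q + r) (hfuel : s.length + 2 ≤ fuel) :
    ∃ R : List ℕ, R.length = q ∧ (x :: R) <:+ elimSteps k fuel 0 (x :: s) := by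
  rcases q with _ | j
  · obtain ⟨f, rfl⟩ : ∃ f, fuel = f + s.length + 1 := ⟨fuel - s.length - 1, by omega⟩
    refine ⟨[], rfl, ?_⟩
    rw [elimSteps_skip, elimSteps_append_of_length_le (by omega), elimSteps_singleton]
    exact List.suffix_append _ _
  · have hmul : (k + 1) * (j + 1) = k + (k + 1) * j + 1 := by ring
    obtain ⟨f, rfl⟩ : ∃ f, fuel = f + (r + 1) + (k + 1) * (j + 1) :=
      ⟨fuel - (r + 1) - (k + 1) * (j + 1), by omega⟩
    obtain ⟨K, V, hV, hK⟩ :=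
      elimSteps_rounds_cons (k := k) (f + (r + 1)) j x (s := s) (by omega)
    obtain ⟨d, D, hD⟩ : ∃ d D, s.drop (k + (k + 1) * j) = d :: D :=
      List.exists_cons_of_length_pos (by simp only [List.length_drop]; omega)
    have hDlen : D.length + 1 = r := by
      have := congrArg List.length hD
      simp only [List.length_drop, List.length_cons] at this
      rw [← this]
      omega
    rw [hK, hD, show f + (r + 1) = f + 1 + D.length + 1 by omega, List.cons_append, elimSteps_skip,
      List.append_assoc, elimSteps_append_of_length_le (by omega), List.cons_append,
      elimSteps_kill (by omega)]
    refine ⟨_, ?_, (List.suffix_append _ _).trans (List.suffix_append _ _)⟩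
    rw [(elimSteps_perm _ _ _).length_eq]
    simp [hV]

theorem exists_suffix_elimSteps {a b q r fuel x : ℕ} {s : List ℕ} (haq : a = (k + 1) * q + r)
    (hr1 : 0 < r) (hr2 : r < k + 1) (hs : s.length + 1 = a * (k + 1) ^ b)
    (hfuel : 2 * (s.length + 1) ≤ fuel) :
    ∃ R : List ℕ, R.length = q ∧ (x :: R) <:+ elimSteps k fuel 0 (x :: s) := by
  induction b generalizing s fuel with
  | zero =>
    exact exists_suffix_elimSteps_of_eq_mul_add hr1 hr2 (by rw [hs, haq, pow_zero, mul_one])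
      (by omega)
  | succ b ih =>
    have hk : 1 ≤ k := by omega
    obtain ⟨j, hj⟩ : ∃ j, a * (k + 1) ^ b = j + 1 :=
      Nat.exists_eq_add_one.mpr (Nat.mul_pos (by omega) (by positivity))
    have hsj : s.length = k + (k + 1) * j := by
      rw [pow_succ, ← mul_assoc, hj] at hs
      linarith
    obtain ⟨f, rfl⟩ : ∃ f, fuel = f + (k + 1) * (j + 1) :=
      Nat.exists_eq_add_of_le' (by nlinarith)
    obtain ⟨K, V, hV, hK⟩ := elimSteps_rounds_cons (k := k) f j x (s := s) hsj.ge
    rw [List.drop_eq_nil_of_le hsj.le, List.nil_append] at hK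
    obtain ⟨R, hR, hsuf⟩ := ih (s := V) (fuel := f) (by rw [hV, hj]) (by nlinarith)
    exact ⟨R, hR, hK ▸ hsuf.trans (List.suffix_append K _)⟩

lemma idxOf_add_length_add_one_of_suffix {α : Type*} [DecidableEq α] {l R : List α} {x : α}
    (hl : l.Nodup) (hsuf : (x :: R) <:+ l) : l.idxOf x + R.length + 1 = l.length := by
  obtain ⟨L, rfl⟩ := hsuf
  have hx : x ∉ L := fun hxL =>
    (List.nodup_append.mp hl).2.2 x hxL x List.mem_cons_self rfl
  rw [List.idxOf_append_of_notMem hx, List.idxOf_cons_self]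
  simp
  omega

end Chainsaw

open Chainsaw in
theorem chainsaw_elim_time_multiple_general (n k x m a b q r : ℕ)
    (hx : x = (k + 1) * m) (hxn : x < n)
    (hdecomp : n - k * m = a * (k + 1) ^ b)
    (haq : a = (k + 1) * q + r) (hr1 : 0 < r) (hr2 : r < k + 1) :
    elimTime n k x = n - q := by
  subst hx
  have hm : (k + 1) * m = k * m + m := by ring
  have hfuel : 2 * n + (k + 1) * m ≤ (k + 2) * (n + 1) * (n + 1) :=
    calc 2 * n + (k + 1) * m ≤ 2 * (n + 1) * (n + 1) := by nlinarith
      _ ≤ (k + 2) * (n + 1) * (n + 1) := by gcongr; omega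
  obtain ⟨f, hf⟩ : ∃ f, (k + 2) * (n + 1) * (n + 1) = f + 2 * n + (k + 1) * m :=
    ⟨(k + 2) * (n + 1) * (n + 1) - 2 * n - (k + 1) * m, by omega⟩
  obtain ⟨K, V, hV, hK⟩ :=
    elimSteps_rounds (k := k) (f + 2 * n) m (s := List.range n) (by simp; omega)
  rw [List.drop_eq_getElem_cons (by simpa using hxn), List.getElem_range,
    List.cons_append] at hK
  obtain ⟨R, hR, hsuf⟩ := exists_suffix_elimSteps (b := b) (fuel := f + 2 * n)
    (x := (k + 1) * m) (s := (List.range n).drop ((k + 1) * m + 1) ++ V) haq hr1 hr2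
    (by simp; omega) (by simp; omega)
  have hperm := elimSteps_perm (k := k) (f + 2 * n + (k + 1) * m) 0 (List.range n)
  have hidx := idxOf_add_length_add_one_of_suffix (hperm.nodup_iff.mpr List.nodup_range)
    (hsuf.trans (hK ▸ List.suffix_append K _))
  rw [hperm.length_eq, List.length_range] at hidx
  unfold elimTime elimOrder
  rw [hf]
  omega

/-- If `x = (k+1)m`, write `n - km = a(k+1)^b` with `(k+1) ∤ a`, and
`a = (k+1)q + r` with `0 < r < k+1`. Then soldier `x` is eliminated after
exactly `n - q` seconds. -/
theorem chainsaw_elim_time_multiple (n k x m a b q r : ℕ)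
    (hk : 1 ≤ k) (hn : 1 ≤ n)
    (hx : x = (k + 1) * m) (hxn : x < n) (hpos : k * m < n)
    (hdecomp : n - k * m = a * (k + 1) ^ b) (hnd : ¬ (k + 1) ∣ a)
    (haq : a = (k + 1) * q + r) (hr1 : 0 < r) (hr2 : r < k + 1) :
    elimTime n k x = n - q :=
  chainsaw_elim_time_multiple_general n k x m a b q r hx hxn hdecomp haq hr1 hr2
end

section
/- In the Feline Texas Chainsaw Josephus game, for any k ≥ 1, ℓ ≥ 1, and n ≥ k, the survivor of the game with (k+1)n soldiers equals k+1 times the survivor of the game with n soldiers: T((k+1)n, k, ℓ) = (k+1)·T(n, k, ℓ). -/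
/-!
Arrange the `(k+1)n` soldiers in `n` consecutive blocks: a leader `(k+1)x` followed by its
`k` followers `(k+1)x+1, …, (k+1)x+k`. Every round then skips a leader and hits exactly its
own followers, so each trip around the circle costs every follower one life and leaves the
leaders untouched. After `ℓ` trips (`nℓ` rounds) only the leaders remain, in order, with `ℓ`
lives each and leader `0` in front: this is the game on `n` soldiers with labels multiplied
by `k+1`. The fuel in `felineT` is harmless because a round with two or more soldiers always
removes a life, so any fuel above the total number of lives gives the same answer.
-/

namespace Feline

def totalLives (s : List (ℕ × ℕ)) : ℕ := (s.map Prod.snd).sum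

def hitAll (s : List (ℕ × ℕ)) : List (ℕ × ℕ) :=
  s.filterMap fun p => if p.2 ≤ 1 then none else some (p.1, p.2 - 1)

section Rounds

lemma hitOne_cons_cons (x l : ℕ) (a : ℕ × ℕ) (r : List (ℕ × ℕ)) :
    hitOne ((x, l) :: a :: r) = if l ≤ 1 then a :: r else (a :: r) ++ [(x, l - 1)] :=
  rfl

lemma hitOne_iterate_length_append (s t : List (ℕ × ℕ)) (ht : t ≠ []) :
    hitOne^[s.length] (s ++ t) = t ++ hitAll s := by
  induction s generalizing t with
  | nil => simp [hitAll]
  | cons p s ih =>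
    obtain ⟨x, l⟩ := p
    obtain ⟨a, r, hr⟩ := List.exists_cons_of_ne_nil (by simp [ht] : s ++ t ≠ [])
    rw [List.length_cons, Function.iterate_succ_apply, List.cons_append, hr,
      hitOne_cons_cons, ← hr]
    by_cases hl : l ≤ 1
    · rw [if_pos hl, ih t ht]
      simp [hitAll, hl]
    · rw [if_neg hl, List.append_assoc, ih _ (by simp)]
      simp [hitAll, hl]

lemma felineRound_cons_append (k : ℕ) (m : ℕ × ℕ) (s t : List (ℕ × ℕ))
    (hs : s.length = k) : felineRound k ((m :: s) ++ t) = t ++ m :: hitAll s := by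
  have hskip : skipOne ((m :: s) ++ t) = s ++ (t ++ [m]) := by simp [skipOne]
  rw [felineRound, hskip, ← hs, hitOne_iterate_length_append s _ (by simp)]
  simp

lemma felineRun_succ_of_two_le_length (k f : ℕ) (s : List (ℕ × ℕ)) (hs : 2 ≤ s.length) :
    felineRun k (f + 1) s = felineRun k f (felineRound k s) := by
  rw [felineRun, if_neg (by omega)]

lemma felineRun_of_length_le_one (k f : ℕ) (s : List (ℕ × ℕ)) (hs : s.length ≤ 1) :
    felineRun k f s = (s.headD (0, 0)).1 := by
  cases f with
  | zero => rfl
  | succ f => rw [felineRun, if_pos hs]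

end Rounds

section Blocks

def followers (k j x : ℕ) : List (ℕ × ℕ) := (List.range k).map fun i => ((k + 1) * x + 1 + i, j)

def block (k ℓ j x : ℕ) : List (ℕ × ℕ) := ((k + 1) * x, ℓ) :: followers k j x

lemma hitAll_followers (k j x : ℕ) : hitAll (followers k (j + 2) x) = followers k (j + 1) x := by
  simp [hitAll, followers, List.filterMap_map]

lemma hitAll_followers_one (k x : ℕ) : hitAll (followers k 1 x) = [] := by
  simp [hitAll, followers, List.filterMap_map]

lemma map_range_mul_eq_flatMap_block (k ℓ n : ℕ) :
    (List.range ((k + 1) * n)).map (fun i => (i, ℓ)) = (List.range n).flatMap (block k ℓ ℓ) := by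
  induction n with
  | zero => simp
  | succ n ih =>
    rw [List.range_succ, Nat.mul_succ, List.range_add, List.map_append, ih,
      List.flatMap_append, List.flatMap_singleton, List.range_succ_eq_map]
    simp only [block, followers, List.map_cons, List.map_map, Function.comp_def]
    congr 3
    funext i
    rw [Nat.succ_eq_add_one, Nat.add_comm i, Nat.add_assoc]

/-- One trip around a circle of blocks: each round skips a leader and hits its followers. -/
lemma felineRun_flatMap_block_append (k ℓ j : ℕ) (hk : 1 ≤ k) (xs : List ℕ)
    (t : List (ℕ × ℕ)) (f : ℕ) :
    felineRun k (xs.length + f) (xs.flatMap (block k ℓ j) ++ t)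
      = felineRun k f (t ++ xs.flatMap fun x => ((k + 1) * x, ℓ) :: hitAll (followers k j x)) := by
  induction xs generalizing t with
  | nil => simp
  | cons x xs ih =>
    have hlen : 2 ≤ ((x :: xs).flatMap (block k ℓ j) ++ t).length := by
      simp [block, followers]
      omega
    rw [List.length_cons, Nat.add_right_comm, felineRun_succ_of_two_le_length _ _ _ hlen,
      List.flatMap_cons, List.append_assoc, block,
      felineRound_cons_append k _ _ _ (by simp [followers]), List.append_assoc, ih]
    simp

lemma felineRun_flatMap_block (k ℓ n j f : ℕ) (hk : 1 ≤ k) :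
    felineRun k (n * (j + 1) + f) ((List.range n).flatMap (block k ℓ (j + 1)))
      = felineRun k f ((List.range n).map fun x => ((k + 1) * x, ℓ)) := by
  induction j generalizing f with
  | zero =>
    have h := felineRun_flatMap_block_append k ℓ 1 hk (List.range n) [] f
    simp only [hitAll_followers_one, List.length_range, List.append_nil, List.nil_append,
      ← List.map_eq_flatMap] at h
    rwa [Nat.zero_add, Nat.mul_one]
  | succ j ih =>
    have h := felineRun_flatMap_block_append k ℓ (j + 2) hk (List.range n) [] (n * (j + 1) + f)
    simp only [hitAll_followers, List.length_range, List.append_nil, List.nil_append] at h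
    rw [Nat.mul_succ, Nat.add_right_comm, Nat.add_comm _ n, Nat.add_assoc, h]
    exact ih f

end Blocks

section Relabel

variable (φ : ℕ → ℕ)

lemma skipOne_map (g : ℕ × ℕ → ℕ × ℕ) (s : List (ℕ × ℕ)) :
    skipOne (s.map g) = (skipOne s).map g := by
  cases s <;> simp [skipOne]

lemma hitOne_map_prodMap (s : List (ℕ × ℕ)) :
    hitOne (s.map (Prod.map φ id)) = (hitOne s).map (Prod.map φ id) := by
  match s with
  | [] => rfl
  | [p] => rfl
  | (x, l) :: a :: r =>
    simp only [List.map_cons, Prod.map_apply, id_eq, hitOne_cons_cons]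
    split <;> simp

lemma felineRound_map_prodMap (k : ℕ) (s : List (ℕ × ℕ)) :
    felineRound k (s.map (Prod.map φ id)) = (felineRound k s).map (Prod.map φ id) := by
  rw [felineRound, felineRound, skipOne_map]
  generalize skipOne s = t
  induction k generalizing t with
  | zero => rfl
  | succ k ih => rw [Function.iterate_succ_apply, Function.iterate_succ_apply,
      hitOne_map_prodMap, ih]

/-- The empty circle reports the default label `0`. -/
lemma felineRun_map_prodMap (hφ : φ 0 = 0) (k f : ℕ) (s : List (ℕ × ℕ)) :
    felineRun k f (s.map (Prod.map φ id)) = φ (felineRun k f s) := by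
  induction f generalizing s with
  | zero => cases s <;> simp [felineRun, hφ]
  | succ f ih =>
    by_cases hs : s.length ≤ 1
    · rw [felineRun_of_length_le_one _ _ _ (by simpa using hs),
        felineRun_of_length_le_one _ _ _ hs]
      cases s <;> simp [hφ]
    · rw [felineRun, felineRun, List.length_map, if_neg hs, if_neg hs,
        felineRound_map_prodMap, ih]

end Relabel

section Fuel

lemma totalLives_skipOne (s : List (ℕ × ℕ)) : totalLives (skipOne s) = totalLives s := by
  cases s <;> simp [skipOne, totalLives, Nat.add_comm]

lemma length_skipOne (s : List (ℕ × ℕ)) : (skipOne s).length = s.length := by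
  cases s <;> simp [skipOne]

lemma totalLives_hitOne_le (s : List (ℕ × ℕ)) : totalLives (hitOne s) ≤ totalLives s := by
  match s with
  | [] | [_] => exact le_rfl
  | (x, l) :: a :: r =>
    rw [hitOne_cons_cons]
    split <;> simp [totalLives]; omega

lemma totalLives_hitOne_lt (s : List (ℕ × ℕ)) (hs : 2 ≤ s.length) (halive : ∀ p ∈ s, 1 ≤ p.2) :
    totalLives (hitOne s) < totalLives s := by
  match s with
  | [] | [_] => simp at hs
  | (x, l) :: a :: r =>
    have hl : 1 ≤ l := halive (x, l) (by simp)
    rw [hitOne_cons_cons]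
    split <;> simp [totalLives] <;> omega

lemma totalLives_hitOne_iterate_le (m : ℕ) (s : List (ℕ × ℕ)) :
    totalLives (hitOne^[m] s) ≤ totalLives s := by
  induction m generalizing s with
  | zero => exact le_rfl
  | succ m ih => exact (ih _).trans (totalLives_hitOne_le s)

lemma alive_skipOne {s : List (ℕ × ℕ)} (h : ∀ p ∈ s, 1 ≤ p.2) : ∀ p ∈ skipOne s, 1 ≤ p.2 := by
  cases s with
  | nil => simp [skipOne]
  | cons q r => simpa [skipOne, or_comm] using h

lemma alive_hitOne {s : List (ℕ × ℕ)} (h : ∀ p ∈ s, 1 ≤ p.2) : ∀ p ∈ hitOne s, 1 ≤ p.2 := by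
  match s with
  | [] => simp [hitOne]
  | [_] => simpa [hitOne] using h
  | (x, l) :: a :: r =>
    rw [hitOne_cons_cons]
    split
    · exact fun p hp => h p (List.mem_cons_of_mem _ hp)
    · simp only [List.mem_append, List.mem_singleton]
      rintro p (hp | rfl)
      · exact h p (List.mem_cons_of_mem _ hp)
      · simp only; omega

lemma alive_felineRound (k : ℕ) {s : List (ℕ × ℕ)} (h : ∀ p ∈ s, 1 ≤ p.2) :
    ∀ p ∈ felineRound k s, 1 ≤ p.2 := by
  rw [felineRound]
  induction k generalizing s with
  | zero => exact alive_skipOne h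
  | succ k ih =>
    rw [Function.iterate_succ_apply']
    exact alive_hitOne (ih h)

lemma length_le_totalLives (s : List (ℕ × ℕ)) (h : ∀ p ∈ s, 1 ≤ p.2) :
    s.length ≤ totalLives s := by
  simpa [totalLives] using List.length_le_sum_of_one_le _ (List.forall_mem_map.2 h)

lemma totalLives_felineRound_lt (k : ℕ) (hk : 1 ≤ k) (s : List (ℕ × ℕ)) (hs : 2 ≤ s.length)
    (halive : ∀ p ∈ s, 1 ≤ p.2) : totalLives (felineRound k s) < totalLives s := by
  obtain ⟨k, rfl⟩ := Nat.exists_eq_add_of_le' hk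
  rw [felineRound, Function.iterate_succ_apply]
  calc totalLives (hitOne^[k] (hitOne (skipOne s)))
      ≤ totalLives (hitOne (skipOne s)) := totalLives_hitOne_iterate_le _ _
    _ < totalLives (skipOne s) :=
        totalLives_hitOne_lt _ (length_skipOne s ▸ hs) (alive_skipOne halive)
    _ = totalLives s := totalLives_skipOne s

lemma felineRun_fuel_congr (k : ℕ) (hk : 1 ≤ k) (f₁ f₂ : ℕ) (s : List (ℕ × ℕ))
    (halive : ∀ p ∈ s, 1 ≤ p.2) (h₁ : totalLives s ≤ f₁ + 1) (h₂ : totalLives s ≤ f₂ + 1) :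
    felineRun k f₁ s = felineRun k f₂ s := by
  induction f₁ generalizing f₂ s with
  | zero =>
    have hs : s.length ≤ 1 := (length_le_totalLives s halive).trans h₁
    rw [felineRun_of_length_le_one k 0 s hs, felineRun_of_length_le_one k f₂ s hs]
  | succ f₁ ih =>
    by_cases hs : s.length ≤ 1
    · rw [felineRun_of_length_le_one _ _ s hs, felineRun_of_length_le_one _ _ s hs]
    · have hs : 2 ≤ s.length := by omega
      have hlives := (length_le_totalLives s halive).trans' hs
      obtain ⟨f₂, rfl⟩ : ∃ f, f₂ = f + 1 := ⟨f₂ - 1, by omega⟩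
      have hlt := totalLives_felineRound_lt k hk s hs halive
      rw [felineRun_succ_of_two_le_length k f₁ s hs, felineRun_succ_of_two_le_length k f₂ s hs]
      exact ih f₂ _ (alive_felineRound k halive) (by omega) (by omega)

end Fuel

lemma totalLives_map_range (n ℓ : ℕ) :
    totalLives ((List.range n).map fun i => (i, ℓ)) = n * ℓ := by
  simp [totalLives, Function.comp_def]

end Feline

theorem feline_scale_general (n k ℓ : ℕ) (hk : 1 ≤ k) (hl : 1 ≤ ℓ) :
    felineT ((k + 1) * n) k ℓ = (k + 1) * felineT n k ℓ := by
  open Feline in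
  obtain ⟨j, rfl⟩ := Nat.exists_eq_add_of_le' hl
  have hleaders : (List.range n).map (fun x => ((k + 1) * x, j + 1))
      = ((List.range n).map fun i => (i, j + 1)).map (Prod.map ((k + 1) * ·) id) := by
    simp [Function.comp_def]
  have hfuel : (k + 1) * n * (j + 1) + 1 = n * (j + 1) + (k * n * (j + 1) + 1) := by ring
  rw [felineT, felineT, map_range_mul_eq_flatMap_block, hfuel,
    felineRun_flatMap_block _ _ _ _ _ hk, hleaders, felineRun_map_prodMap _ (mul_zero _)]
  congr 1
  refine felineRun_fuel_congr k hk _ _ _ (by simp) ?_ ?_ <;> rw [totalLives_map_range]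
  · nlinarith [Nat.mul_le_mul_right (n * (j + 1)) hk]
  · omega

/-- Multiplicative reduction lemma for the Feline Texas Chainsaw Josephus game:
`T((k+1)n, k, ℓ) = (k+1)·T(n, k, ℓ)` for `n ≥ k`. -/
theorem feline_scale (n k ℓ : ℕ) (hk : 1 ≤ k) (hl : 1 ≤ ℓ) (hn : k ≤ n) :
    felineT ((k + 1) * n) k ℓ = (k + 1) * felineT n k ℓ :=
  feline_scale_general n k ℓ hk hl
end

section
/- In the Feline Texas Chainsaw Josephus game with gcd(n, k+1) = 1 and ℓ > k, if ℓ ≡ ℓ' (mod k) with ℓ' replaced so that 1 ≤ ℓ' (i.e., ℓ' = ℓ - k suffices), then the survivor is unchanged: T(n, k, ℓ) = T(n, k, ℓ - k). -/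
/-!
Number the single actions of the game `0, 1, 2, …`; action `j` is a skip exactly when
`(k + 1) ∣ j`. As long as nobody dies, action `j` falls on soldier `j % n`, so during the first
`n` rounds (`n * (k + 1)` actions) soldier `t` is hit once for every `j < n * (k + 1)` with
`j ≡ t [MOD n]` and `¬ (k + 1) ∣ j`. That residue class has `k + 1` members below `n * (k + 1)`,
and since `gcd n (k + 1) = 1` exactly one of them is divisible by `k + 1` (Chinese remainder
theorem). Hence every soldier has lost at most `k - 1 < ℓ - 1` lives before each hit, nobody dies,
and after `n` rounds the circle is back in its initial order with `ℓ - k` lives each: the initial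
position of the game with `ℓ - k` lives. The remaining fuel is irrelevant, as each round costs at
least one life.
-/

open Finset

lemma card_filter_range_mul_modEq_and_modEq {n m : ℕ} (co : n.Coprime m) (hn : n ≠ 0)
    (hm : m ≠ 0) (a b : ℕ) :
    #{j ∈ range (n * m) | j ≡ a [MOD n] ∧ j ≡ b [MOD m]} = 1 := by
  set c := Nat.chineseRemainder co a b
  rw [card_eq_one]
  refine ⟨c, ext fun j => ?_⟩
  simp only [mem_filter, mem_range, mem_singleton]
  constructor
  · rintro ⟨hj, hja, hjb⟩
    exact (Nat.chineseRemainder_modEq_unique co hja hjb).eq_of_lt_of_lt hj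
      (Nat.chineseRemainder_lt_mul co a b hn hm)
  · rintro rfl
    exact ⟨Nat.chineseRemainder_lt_mul co a b hn hm, c.prop⟩

lemma card_filter_range_mul_modEq {n m : ℕ} (hn : 0 < n) (a : ℕ) :
    #{j ∈ range (n * m) | j ≡ a [MOD n]} = m := by
  rw [← Nat.count_eq_card_filter_range, Nat.count_modEq_card _ hn]
  simp [hn.ne']

def hitCount (n k m t : ℕ) : ℕ := #{j ∈ range m | j ≡ t [MOD n] ∧ ¬ (k + 1) ∣ j}

lemma hitCount_zero (n k t : ℕ) : hitCount n k 0 t = 0 := rfl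

lemma hitCount_congr {n k m t t' : ℕ} (h : t ≡ t' [MOD n]) :
    hitCount n k m t = hitCount n k m t' := by
  unfold hitCount
  congr! 3 with j
  exact ⟨fun hj => hj.trans h, fun hj => hj.trans h.symm⟩

lemma hitCount_succ (n k m t : ℕ) :
    hitCount n k (m + 1) t =
      hitCount n k m t + if m ≡ t [MOD n] ∧ ¬ (k + 1) ∣ m then 1 else 0 := by
  simp only [hitCount, range_add_one, filter_insert]
  split_ifs with h
  · rw [card_insert_of_notMem (by simp)]
  · rfl

lemma hitCount_mono (n k t : ℕ) : Monotone (hitCount n k · t) := fun _ _ h =>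
  card_le_card (filter_subset_filter _ (range_subset_range.mpr h))

lemma hitCount_full {n k : ℕ} (hn : 0 < n) (co : n.Coprime (k + 1)) (t : ℕ) :
    hitCount n k (n * (k + 1)) t = k := by
  have hres := card_filter_range_mul_modEq (m := k + 1) hn t
  have hskip := card_filter_range_mul_modEq_and_modEq co hn.ne' k.succ_ne_zero t 0
  simp only [Nat.modEq_zero_iff_dvd] at hskip
  rw [← card_filter_add_card_filter_not (fun j => (k + 1) ∣ j), filter_filter,
    filter_filter, hskip] at hres
  rw [hitCount]
  omega

lemma hitCount_self_lt {n k m : ℕ} (hn : 0 < n) (co : n.Coprime (k + 1)) (hm : m < n * (k + 1))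
    (hd : ¬ (k + 1) ∣ m) : hitCount n k m m < k := by
  have := hitCount_mono n k m (Nat.succ_le_of_lt hm)
  simp only at this
  rw [hitCount_full hn co, hitCount_succ, if_pos ⟨rfl, hd⟩] at this
  omega

/-- The circle after the first `m` actions, for `m ≤ n * (k + 1)`. -/
def circleAt (n k ℓ m : ℕ) : List (ℕ × ℕ) :=
  (List.range n).map fun i => ((m + i) % n, ℓ - hitCount n k m (m + i))

lemma circleAt_zero (n k ℓ : ℕ) : circleAt n k ℓ 0 = (List.range n).map fun i => (i, ℓ) := by
  refine List.map_congr_left fun i hi => ?_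
  rw [List.mem_range] at hi
  simp [hitCount_zero, Nat.mod_eq_of_lt hi]

lemma circleAt_full {n k : ℕ} (hn : 0 < n) (co : n.Coprime (k + 1)) (ℓ : ℕ) :
    circleAt n k ℓ (n * (k + 1)) = (List.range n).map fun i => (i, ℓ - k) := by
  refine List.map_congr_left fun i hi => ?_
  rw [List.mem_range] at hi
  simp [hitCount_full hn co, Nat.mod_eq_of_lt hi]

lemma circleAt_eq_cons {n : ℕ} (hn : 0 < n) (k ℓ m : ℕ) :
    circleAt n k ℓ m = (m % n, ℓ - hitCount n k m m) ::
      (List.range (n - 1)).map fun i => ((m + (i + 1)) % n, ℓ - hitCount n k m (m + (i + 1))) := by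
  obtain ⟨n, rfl⟩ := Nat.exists_eq_add_one_of_ne_zero hn.ne'
  simp [circleAt, List.range_succ_eq_map]

lemma circleAt_succ {n : ℕ} (hn : 0 < n) (k ℓ m : ℕ) :
    circleAt n k ℓ (m + 1) =
      (List.range (n - 1)).map (fun i => ((m + (i + 1)) % n, ℓ - hitCount n k m (m + (i + 1)))) ++
        [(m % n, ℓ - hitCount n k (m + 1) m)] := by
  obtain ⟨n, rfl⟩ := Nat.exists_eq_add_one_of_ne_zero hn.ne'
  simp only [circleAt, List.range_succ, List.map_append, List.map_singleton, Nat.add_sub_cancel]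
  congr 1
  · refine List.map_congr_left fun i hi => ?_
    rw [List.mem_range] at hi
    have hne : ¬ m ≡ m + (i + 1) [MOD n + 1] := fun h => by
      have := (Nat.modEq_iff_dvd' (by omega)).mp h
      simp only [Nat.add_sub_cancel_left] at this
      exact absurd (Nat.le_of_dvd (by omega) this) (by omega)
    rw [add_right_comm, add_assoc, hitCount_succ, if_neg (by tauto), add_zero]
  · have hwrap : m + 1 + n = m + (n + 1) := by ring
    rw [hwrap, Nat.add_mod_right, hitCount_congr (Nat.add_modEq_right)]

lemma skipOne_circleAt {n : ℕ} (hn : 0 < n) {k ℓ m : ℕ} (hd : (k + 1) ∣ m) :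
    skipOne (circleAt n k ℓ m) = circleAt n k ℓ (m + 1) := by
  rw [circleAt_eq_cons hn, circleAt_succ hn, skipOne, hitCount_succ, if_neg (by tauto), add_zero]

lemma hitOne_circleAt {n : ℕ} (hn : 2 ≤ n) {k ℓ m : ℕ} (hd : ¬ (k + 1) ∣ m)
    (hl : 2 ≤ ℓ - hitCount n k m m) :
    hitOne (circleAt n k ℓ m) = circleAt n k ℓ (m + 1) := by
  obtain ⟨n, rfl⟩ : ∃ n', n = n' + 2 := ⟨n - 2, by omega⟩
  rw [circleAt_eq_cons (by omega), circleAt_succ (by omega), hitCount_succ, if_pos ⟨rfl, hd⟩,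
    show n + 2 - 1 = n + 1 from rfl, List.range_succ_eq_map, List.map_cons]
  simp only [hitOne]
  rw [if_neg (by omega), Nat.sub_add_eq]

lemma hitOne_iterate_circleAt {n k ℓ : ℕ} (hn : 2 ≤ n) (co : n.Coprime (k + 1)) (hℓ : k < ℓ)
    {r j : ℕ} (hr : r < n) (hj : j ≤ k) :
    hitOne^[j] (circleAt n k ℓ (r * (k + 1) + 1)) = circleAt n k ℓ (r * (k + 1) + 1 + j) := by
  induction j with
  | zero => rfl
  | succ j ih =>
    have hd : ¬ (k + 1) ∣ r * (k + 1) + 1 + j := by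
      rw [add_assoc, Nat.dvd_add_right (Nat.dvd_mul_left _ _)]
      exact fun h => absurd (Nat.le_of_dvd (by omega) h) (by omega)
    have hm : r * (k + 1) + 1 + j < n * (k + 1) := by
      have := Nat.mul_le_mul_right (k + 1) hr
      rw [Nat.succ_mul] at this
      omega
    have hlives := hitCount_self_lt (by omega) co hm hd
    rw [Function.iterate_succ_apply', ih (by omega), hitOne_circleAt hn hd (by omega)]
    rfl

lemma felineRound_circleAt {n k ℓ : ℕ} (hn : 2 ≤ n) (co : n.Coprime (k + 1)) (hℓ : k < ℓ)
    {r : ℕ} (hr : r < n) :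
    felineRound k (circleAt n k ℓ (r * (k + 1))) = circleAt n k ℓ ((r + 1) * (k + 1)) := by
  rw [felineRound, skipOne_circleAt (by omega) (Nat.dvd_mul_left _ _),
    hitOne_iterate_circleAt hn co hℓ hr le_rfl]
  ring_nf

lemma felineRun_circleAt_zero {n k ℓ : ℕ} (hn : 2 ≤ n) (co : n.Coprime (k + 1)) (hℓ : k < ℓ)
    {r : ℕ} (hr : r ≤ n) (f : ℕ) :
    felineRun k (r + f) (circleAt n k ℓ 0) = felineRun k f (circleAt n k ℓ (r * (k + 1))) := by
  induction r generalizing f with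
  | zero => simp
  | succ r ih =>
    have hlen : ¬ (circleAt n k ℓ (r * (k + 1))).length ≤ 1 := by simp [circleAt]; omega
    rw [show r + 1 + f = r + (f + 1) by omega, ih (by omega), felineRun, if_neg hlen,
      felineRound_circleAt hn co hℓ hr]

def totalLives (s : List (ℕ × ℕ)) : ℕ := (s.map Prod.snd).sum

lemma totalLives_map_const (n ℓ : ℕ) :
    totalLives ((List.range n).map fun i => (i, ℓ)) = n * ℓ := by
  simp [totalLives, Function.comp_def]

lemma totalLives_skipOne (s : List (ℕ × ℕ)) : totalLives (skipOne s) = totalLives s := by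
  cases s with
  | nil => rfl
  | cons a t => simp [skipOne, totalLives, add_comm]

lemma skipOne_lives_pos {s : List (ℕ × ℕ)} (hs : ∀ p ∈ s, 0 < p.2) :
    ∀ p ∈ skipOne s, 0 < p.2 := by
  cases s with
  | nil => exact hs
  | cons a t => simpa [skipOne, or_comm] using hs

lemma hitOne_lives_pos {s : List (ℕ × ℕ)} (hs : ∀ p ∈ s, 0 < p.2) :
    ∀ p ∈ hitOne s, 0 < p.2 := by
  match s with
  | [] | [_] => exact hs
  | (x, l) :: b :: t =>
    simp only [hitOne]
    split_ifs with hl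
    · exact fun p hp => hs p (List.mem_cons_of_mem _ hp)
    · simp only [List.mem_append, List.mem_singleton]
      rintro p (hp | rfl)
      · exact hs p (List.mem_cons_of_mem _ hp)
      · simp only; omega

lemma hitOne_totalLives_le (s : List (ℕ × ℕ)) : totalLives (hitOne s) ≤ totalLives s := by
  match s with
  | [] | [_] => exact le_rfl
  | (x, l) :: b :: t =>
    simp only [hitOne]
    split_ifs
    · simp [totalLives]
    · simp [totalLives]; omega

lemma hitOne_totalLives_lt {s : List (ℕ × ℕ)} (hlen : 2 ≤ s.length) (hs : ∀ p ∈ s, 0 < p.2) :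
    totalLives (hitOne s) < totalLives s := by
  match s, hlen with
  | (x, l) :: b :: t, _ =>
    have hl : 0 < l := hs (x, l) List.mem_cons_self
    simp only [hitOne]
    split_ifs <;> simp [totalLives] <;> omega

lemma felineRound_lives_pos (k : ℕ) {s : List (ℕ × ℕ)} (hs : ∀ p ∈ s, 0 < p.2) :
    ∀ p ∈ felineRound k s, 0 < p.2 := by
  rw [felineRound]
  induction k with
  | zero => exact skipOne_lives_pos hs
  | succ k ih => rw [Function.iterate_succ_apply']; exact hitOne_lives_pos ih

lemma felineRound_totalLives_lt {k : ℕ} (hk : 0 < k) {s : List (ℕ × ℕ)} (hlen : 2 ≤ s.length)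
    (hs : ∀ p ∈ s, 0 < p.2) : totalLives (felineRound k s) < totalLives s := by
  obtain ⟨k, rfl⟩ := Nat.exists_eq_add_one_of_ne_zero hk.ne'
  have hiter : ∀ j (s : List (ℕ × ℕ)), totalLives (hitOne^[j] s) ≤ totalLives s := by
    intro j
    induction j with
    | zero => exact fun _ => le_rfl
    | succ j ih => exact fun s => (ih _).trans (hitOne_totalLives_le s)
  calc totalLives (felineRound (k + 1) s)
      ≤ totalLives (hitOne (skipOne s)) := hiter k _
    _ < totalLives (skipOne s) := by
      refine hitOne_totalLives_lt ?_ (skipOne_lives_pos hs)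
      cases s <;> simp_all [skipOne]
    _ = totalLives s := totalLives_skipOne s

lemma felineRun_congr_fuel {k : ℕ} (hk : 0 < k) {f f' : ℕ} {s : List (ℕ × ℕ)}
    (hs : ∀ p ∈ s, 0 < p.2) (hf : totalLives s ≤ f) (hff' : f ≤ f') :
    felineRun k f' s = felineRun k f s := by
  induction f generalizing s f' with
  | zero =>
    obtain rfl : s = [] := by
      cases s with
      | nil => rfl
      | cons p t => exact absurd hf (by simp [totalLives]; have := hs p (by simp); omega)
    cases f' <;> simp [felineRun]
  | succ f ih =>
    obtain ⟨f', rfl⟩ := Nat.exists_eq_add_one_of_ne_zero (by omega : f' ≠ 0)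
    simp only [felineRun]
    split_ifs with hlen
    · rfl
    · exact ih (felineRound_lives_pos k hs)
        (by have := felineRound_totalLives_lt hk (by omega) hs; omega) (by omega)

/-- Lives reduction lemma: if `gcd(n, k+1) = 1` and `ℓ > k`, then
`T(n, k, ℓ) = T(n, k, ℓ - k)`. -/
theorem feline_reduce_lives (n k ℓ : ℕ)
    (hk : 1 ≤ k) (hg : Nat.gcd n (k + 1) = 1) (hl : k < ℓ) :
    felineT n k ℓ = felineT n k (ℓ - k) := by
  rcases Nat.lt_or_ge n 2 with hn | hn
  · interval_cases n <;> simp [felineT, felineRun, List.range_succ]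
  have hfuel : n * (ℓ - k) + 1 ≤ n * (ℓ - 1) + 1 := by gcongr
  calc felineT n k ℓ
      = felineRun k (n + (n * (ℓ - 1) + 1)) (circleAt n k ℓ 0) := by
        have hlives : n * ℓ = n * (ℓ - 1) + n := by
          rw [← Nat.mul_add_one, Nat.sub_add_cancel (by omega)]
        rw [felineT, circleAt_zero, hlives, add_comm _ n, add_assoc]
    _ = felineRun k (n * (ℓ - 1) + 1) ((List.range n).map fun i => (i, ℓ - k)) := by
        rw [felineRun_circleAt_zero hn hg hl le_rfl, circleAt_full (by omega) hg]
    _ = felineT n k (ℓ - k) :=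
        felineRun_congr_fuel hk (by simp; omega) (by rw [totalLives_map_const]; omega) hfuel
end
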